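/- arXiv:math/0611130 — 2 statements merged into one kernel-verified Lean document; each statement's English description precedes it below -/
import Mathlib

section
/- Let μ be an atomless Borel probability measure on ℝ and μ^5 the product measure on (Fin 5 → ℝ). Let A = { x | x 0 < x 1 ∧ x 2 < x 1 ∧ x 2 < x 3 ∧ x 4 < x 3 } (local maxima at positions 1 and 3) and B = { x | x 0 < x 1 ∧ x 2 < x 1 } (local maximum at position 1). Then the conditional probability μ^5(A) / μ^5(B) equals 2/5; i.e. the probability that the next local maximum after a given local maximum occurs at distance 2 is f_m(2) = 2/5. -/
/-!
Almost surely the coordinates of `x ~ μ^n` are distinct, so up to a null set the cube is partitioned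
by the order cells `{x | x ∘ σ strictly increasing}`, `σ` a permutation. Permuting coordinates
preserves `μ^n`, so all `n!` cells have mass `1 / n!`. An event that only depends on the comparisons
`x i < x j` is a union of cells, and its probability is the number of permutations realizing it
divided by `n!`: here `16 / 120` for local maxima at positions 1 and 3, `40 / 120` for one at position 1.
-/

open MeasureTheory ProbabilityTheory Set Function
open scoped ENNReal Nat

theorem measure_prod_diagonal_eq_zero {α : Type*} [MeasurableSpace α] [MeasurableEq α]
    (μ ν : Measure α) [SFinite ν] [NullSingletonClass ν] : μ.prod ν (diagonal α) = 0 := by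
  have h : ∀ a : α, Prod.mk a ⁻¹' diagonal α = {a} := fun a => by ext; simp [eq_comm]
  simp [Measure.prod_apply measurableSet_diagonal, h]

section Pi

variable {α ι : Type*} [MeasurableSpace α] [Fintype ι]

theorem measurePreserving_comp_perm (μ : Measure α) [SigmaFinite μ] (σ : Equiv.Perm ι) :
    MeasurePreserving (fun x : ι → α => x ∘ σ) (Measure.pi fun _ => μ)
      (Measure.pi fun _ => μ) := by
  convert measurePreserving_piCongrLeft (fun _ : ι => μ) σ.symm using 1
  ext x i
  rw [MeasurableEquiv.coe_piCongrLeft, Equiv.piCongrLeft_apply_eq_cast]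
  simp

variable [MeasurableEq α] (μ : Measure α) [IsProbabilityMeasure μ] [NullSingletonClass μ]

theorem ae_ne_pi {i j : ι} (hij : i ≠ j) : ∀ᵐ x ∂Measure.pi (fun _ : ι => μ), x i ≠ x j := by
  have hindep : IndepFun (fun x : ι → α => x i) (fun x => x j) (Measure.pi fun _ => μ) :=
    (iIndepFun_pi (X := fun _ => id) fun _ => aemeasurable_id).indepFun hij
  have hlaw := hindep.map_prod_eq_prod_map_map (measurable_pi_apply i).aemeasurable
    (measurable_pi_apply j).aemeasurable
  rw [(measurePreserving_eval _ i).map_eq, (measurePreserving_eval _ j).map_eq] at hlaw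
  refine ae_iff.2 ?_
  simp only [ne_eq, not_not]
  rw [show {x : ι → α | x i = x j} = (fun x => (x i, x j)) ⁻¹' diagonal α from rfl,
    ← Measure.map_apply (by fun_prop) measurableSet_diagonal, hlaw]
  exact measure_prod_diagonal_eq_zero μ μ

theorem ae_injective_pi : ∀ᵐ x ∂Measure.pi (fun _ : ι => μ), Injective x := by
  have h : ∀ᵐ x ∂Measure.pi (fun _ : ι => μ), ∀ i j, i ≠ j → x i ≠ x j := by
    simp only [ae_all_iff]
    exact fun i j hij => ae_ne_pi μ hij
  filter_upwards [h] with x hx i j hxij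
  by_contra hij
  exact hx i j hij hxij

end Pi

def orderCell {n : ℕ} (σ : Equiv.Perm (Fin n)) : Set (Fin n → ℝ) := {x | StrictMono (x ∘ σ)}

namespace orderCell

variable {n : ℕ} {σ : Equiv.Perm (Fin n)} {x : Fin n → ℝ}

theorem measurableSet (σ : Equiv.Perm (Fin n)) : MeasurableSet (orderCell σ) := by
  simp only [orderCell, StrictMono, comp_apply, ofPred_forall]
  exact .iInter fun _ => .iInter fun _ => .iInter fun _ =>
    measurableSet_lt (measurable_pi_apply _) (measurable_pi_apply _)

theorem eq_sort (hx : x ∈ orderCell σ) : σ = Tuple.sort x :=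
  Tuple.eq_sort_iff.2 ⟨hx.monotone, fun _ _ hij heq => absurd heq (hx hij).ne⟩

theorem sort_mem (hx : Injective x) : x ∈ orderCell (Tuple.sort x) :=
  (Tuple.monotone_sort x).strictMono_of_injective (hx.comp (Tuple.sort x).injective)

theorem pairwise_disjoint : Pairwise (Disjoint on (orderCell (n := n))) :=
  fun _ _ hστ => disjoint_left.2 fun _ hσ hτ => hστ ((eq_sort hσ).trans (eq_sort hτ).symm)

theorem lt_eq (hx : x ∈ orderCell σ) : (fun i j => x i < x j) = fun i j => σ⁻¹ i < σ⁻¹ j :=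
  funext₂ fun i j => propext <| by simpa using hx.lt_iff_lt (a := σ⁻¹ i) (b := σ⁻¹ j)

theorem preimage_comp_perm (σ : Equiv.Perm (Fin n)) :
    (fun x : Fin n → ℝ => x ∘ σ) ⁻¹' orderCell 1 = orderCell σ := rfl

variable (μ : Measure ℝ)

local notation "ν" => Measure.pi fun _ : Fin n => μ

theorem measure_eq_measure_one [SigmaFinite μ] (σ : Equiv.Perm (Fin n)) :
    ν (orderCell σ) = ν (orderCell 1) := by
  rw [← preimage_comp_perm, (measurePreserving_comp_perm μ σ).measure_preimage
    (measurableSet 1).nullMeasurableSet]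

variable [IsProbabilityMeasure μ] [NullSingletonClass μ]

theorem iUnion_ae_eq_univ : (⋃ σ : Equiv.Perm (Fin n), orderCell σ) =ᵐ[ν] univ := by
  filter_upwards [ae_injective_pi μ] with x hx
  exact eq_true (mem_iUnion.2 ⟨_, sort_mem hx⟩)

theorem sum_measure_eq_one : ∑ σ : Equiv.Perm (Fin n), ν (orderCell σ) = 1 := by
  rw [← measure_univ (μ := ν), ← measure_congr (iUnion_ae_eq_univ μ),
    measure_iUnion pairwise_disjoint measurableSet, tsum_fintype]

theorem measure_eq_inv_factorial (σ : Equiv.Perm (Fin n)) : ν (orderCell σ) = (n ! : ℝ≥0∞)⁻¹ := by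
  have h := sum_measure_eq_one μ (n := n)
  simp only [measure_eq_measure_one μ, Finset.sum_const, Finset.card_univ, Fintype.card_perm,
    Fintype.card_fin, nsmul_eq_mul] at h
  rw [measure_eq_measure_one]
  exact ENNReal.eq_inv_of_mul_eq_one_left (by rwa [mul_comm])

end orderCell

open orderCell in
theorem measure_pi_setOf_orderPattern {n : ℕ} (μ : Measure ℝ) [IsProbabilityMeasure μ]
    [NullSingletonClass μ] (p : (Fin n → Fin n → Prop) → Prop) :
    Measure.pi (fun _ : Fin n => μ) {x | p fun i j => x i < x j} =
      Nat.card {σ : Equiv.Perm (Fin n) // p fun i j => σ⁻¹ i < σ⁻¹ j} * (n ! : ℝ≥0∞)⁻¹ := by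
  classical
  set T := Finset.univ.filter fun σ : Equiv.Perm (Fin n) => p fun i j => σ⁻¹ i < σ⁻¹ j
  have hae : {x | p fun i j => x i < x j} =ᵐ[Measure.pi fun _ => μ] ⋃ σ ∈ T, orderCell σ := by
    filter_upwards [ae_injective_pi μ] with x hx
    show (p fun i j => x i < x j) = (x ∈ ⋃ σ ∈ T, orderCell σ)
    refine propext ⟨fun hp => mem_biUnion ?_ (sort_mem hx), ?_⟩
    · rw [lt_eq (sort_mem hx)] at hp
      exact Finset.mem_filter.2 ⟨Finset.mem_univ _, hp⟩
    · rw [mem_iUnion₂]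
      rintro ⟨σ, hσ, hxσ⟩
      rw [lt_eq hxσ]
      exact (Finset.mem_filter.1 hσ).2
  rw [measure_congr hae, measure_biUnion_finset (pairwise_disjoint.set_pairwise _)
    (fun σ _ => measurableSet σ)]
  simp [measure_eq_inv_factorial μ, T, Nat.card_eq_fintype_card, Fintype.card_subtype]

theorem fm_two_eq_two_fifths
    (μ : Measure ℝ) [IsProbabilityMeasure μ] [NullSingletonClass μ] :
    (Measure.pi fun _ : Fin 5 => μ)
        {x | x 0 < x 1 ∧ x 2 < x 1 ∧ x 2 < x 3 ∧ x 4 < x 3} /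
      (Measure.pi fun _ : Fin 5 => μ) {x | x 0 < x 1 ∧ x 2 < x 1} = 2 / 5 := by
  have hA := measure_pi_setOf_orderPattern μ
    fun r : Fin 5 → Fin 5 → Prop => r 0 1 ∧ r 2 1 ∧ r 2 3 ∧ r 4 3
  have hB := measure_pi_setOf_orderPattern μ fun r : Fin 5 → Fin 5 → Prop => r 0 1 ∧ r 2 1
  have hcardA : Nat.card {σ : Equiv.Perm (Fin 5) //
      σ⁻¹ 0 < σ⁻¹ 1 ∧ σ⁻¹ 2 < σ⁻¹ 1 ∧ σ⁻¹ 2 < σ⁻¹ 3 ∧ σ⁻¹ 4 < σ⁻¹ 3} = 16 := by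
    rw [Nat.card_eq_fintype_card]; decide
  have hcardB : Nat.card {σ : Equiv.Perm (Fin 5) // σ⁻¹ 0 < σ⁻¹ 1 ∧ σ⁻¹ 2 < σ⁻¹ 1} = 40 := by
    rw [Nat.card_eq_fintype_card]; decide
  rw [hA, hB, hcardA, hcardB,
    ENNReal.mul_div_mul_right _ _ (by simp) (by simp [Nat.factorial_ne_zero]),
    ENNReal.div_eq_div_iff (by norm_num) (by norm_num) (by norm_num) (by norm_num)]
  norm_num
end

section
/- The series ∑_{d=2}^{∞} d · 3 · 2^d · (d-1) · (d+2) / (d+3)! converges and its sum equals 3; i.e. the average distance between consecutive local maxima of a sequence of i.i.d. continuously distributed random numbers is exactly 3. -/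
/-!
With `d = n + 2`, the summand `d · f_m(d)` telescopes: it equals `b n - b (n + 1)` for
`b n = 3 · 2^(n+2) · (n² + 4n + 6) / (n + 4)!`, where the quadratic `q n = 3 (n² + 4n + 6)`
is the solution of `q n · (n + 5) - 2 q (n + 1) = 3 (n + 1)(n + 2)(n + 4)`.
Since `b n → 0` like `2^n / n!`, the series sums to `b 0 = 3`.
-/

open Filter Topology Nat

theorem hasSum_sub_succ_of_antitone {b : ℕ → ℝ} {l : ℝ} (hb : Antitone b)
    (hl : Tendsto b atTop (𝓝 l)) : HasSum (fun n => b n - b (n + 1)) (b 0 - l) := by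
  rw [hasSum_iff_tendsto_nat_of_nonneg fun n => sub_nonneg.2 (hb n.le_succ)]
  simp_rw [Finset.sum_range_sub']
  exact tendsto_const_nhds.sub hl

noncomputable def maximaGapTail (n : ℕ) : ℝ :=
  3 * 2 ^ (n + 2) * ((n : ℝ) ^ 2 + 4 * n + 6) / (n + 4)!

theorem maximaGapTail_zero : maximaGapTail 0 = 3 := by
  norm_num [maximaGapTail, Nat.factorial]

theorem maximaGapTail_sub_succ (n : ℕ) :
    maximaGapTail n - maximaGapTail (n + 1) =
      ((n : ℝ) + 2) * ((3 * 2 ^ (n + 2) * ((n : ℝ) + 1) * ((n : ℝ) + 4)) / (n + 5)!) := by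
  simp only [maximaGapTail, Nat.factorial_succ]
  push_cast
  field_simp
  ring

theorem maximaGapTail_eq (n : ℕ) :
    maximaGapTail n = 3 * (2 ^ (n + 2) / (n + 2)!) - 9 / 2 * (2 ^ (n + 3) / (n + 3)!)
      + 9 / 2 * (2 ^ (n + 4) / (n + 4)!) := by
  simp only [maximaGapTail, Nat.factorial_succ]
  push_cast
  field_simp
  ring

theorem tendsto_maximaGapTail : Tendsto maximaGapTail atTop (𝓝 0) := by
  have hshift (k : ℕ) : Tendsto (fun n => (2 : ℝ) ^ (n + k) / (n + k)!) atTop (𝓝 0) :=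
    (tendsto_add_atTop_iff_nat k).2 (FloorSemiring.tendsto_pow_div_factorial_atTop 2)
  simpa [funext maximaGapTail_eq] using
    (((hshift 2).const_mul 3).sub ((hshift 3).const_mul (9 / 2))).add ((hshift 4).const_mul (9 / 2))

theorem average_distance_eq_three :
    HasSum (fun n : ℕ =>
      ((n : ℝ) + 2) *
        ((3 * 2 ^ (n + 2) * ((n : ℝ) + 1) * ((n : ℝ) + 4)) / (Nat.factorial (n + 5))))
      3 := by
  have hanti : Antitone maximaGapTail := antitone_nat_of_succ_le fun n =>
    sub_nonneg.1 (by rw [maximaGapTail_sub_succ]; positivity)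
  simpa [maximaGapTail_sub_succ, maximaGapTail_zero] using
    hasSum_sub_succ_of_antitone hanti tendsto_maximaGapTail
end
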